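/- arXiv:1212.1427 — 7 statements merged into one kernel-verified Lean document; each statement's English description precedes it below -/
import Mathlib

section
/- If u₁ and u₂ are twice continuously differentiable solutions of -u'' + V(x)u = 0 on an interval (a,b) with Wronskian u₁u₂' - u₂u₁' = 1, and u₁(x)u₂(x) ≠ 0 on (a,b), then Z(x) := (u₁(x)u₂(x))^{1/2} satisfies the diagonal differential equation -Z'' + V(x)Z - 1/(4Z³) = 0 on (a,b). -/
/-!
Write `P = u₁ u₂`, so that `Z = √P`. For any positive `C²` function, `(√P)'' = (2 P P'' - P'²) / (4 (√P)³)`.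
For the product of two solutions of `u'' = V u`, `P'' = 2 V P + 2 u₁' u₂'`, and
`P'² - (u₁ u₂' - u₂ u₁')² = 4 P u₁' u₂'`, hence `2 P P'' - P'² = 4 V P² - W²`.
With `W = 1` this gives `Z'' = (4 V Z⁴ - 1) / (4 Z³) = V Z - 1 / (4 Z³)`.
-/

open Filter Topology

section Smoothness

variable {𝕜 F : Type*} [NontriviallyNormedField 𝕜] [NormedAddCommGroup F] [NormedSpace 𝕜 F]
  {n : WithTop ℕ∞} {f : 𝕜 → F} {x : 𝕜}

theorem ContDiffAt.eventually_differentiableAt (hf : ContDiffAt 𝕜 n f x) (hn : 1 ≤ n) :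
    ∀ᶠ y in 𝓝 x, DifferentiableAt 𝕜 f y :=
  ((hf.of_le hn).eventually (by simp)).mono fun _ hy => hy.differentiableAt one_ne_zero

theorem ContDiffAt.differentiableAt_deriv (hf : ContDiffAt 𝕜 n f x) (hn : 2 ≤ n) :
    DifferentiableAt 𝕜 (deriv f) x :=
  ((hf.of_le hn).derivWithin (m := 1) (by norm_num)).differentiableAt one_ne_zero

end Smoothness

section SecondDerivative

variable {𝕜 : Type*} [NontriviallyNormedField 𝕜] {f g : 𝕜 → 𝕜} {x : 𝕜}

theorem deriv_deriv_mul (hf : ContDiffAt 𝕜 2 f x) (hg : ContDiffAt 𝕜 2 g x) :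
    deriv (deriv fun y => f y * g y) x =
      deriv (deriv f) x * g x + 2 * (deriv f x * deriv g x) + f x * deriv (deriv g) x := by
  have hderiv : deriv (fun y => f y * g y) =ᶠ[𝓝 x] fun y => deriv f y * g y + f y * deriv g y := by
    filter_upwards [hf.eventually_differentiableAt one_le_two,
      hg.eventually_differentiableAt one_le_two] with y hfy hgy using deriv_mul hfy hgy
  have hf₁ := (hf.differentiableAt two_ne_zero).hasDerivAt
  have hg₁ := (hg.differentiableAt two_ne_zero).hasDerivAt
  have hf₂ := (hf.differentiableAt_deriv le_rfl).hasDerivAt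
  have hg₂ := (hg.differentiableAt_deriv le_rfl).hasDerivAt
  rw [hderiv.deriv_eq, ((hf₂.fun_mul hg₁).fun_add (hf₁.fun_mul hg₂)).deriv]
  ring

theorem two_mul_deriv_deriv_mul_sub_sq {v : 𝕜} (hf : ContDiffAt 𝕜 2 f x) (hg : ContDiffAt 𝕜 2 g x)
    (hf'' : deriv (deriv f) x = v * f x) (hg'' : deriv (deriv g) x = v * g x) :
    2 * (f x * g x) * deriv (deriv fun y => f y * g y) x - deriv (fun y => f y * g y) x ^ 2 =
      4 * v * (f x * g x) ^ 2 - (f x * deriv g x - g x * deriv f x) ^ 2 := by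
  rw [deriv_deriv_mul hf hg, hf'', hg'',
    deriv_fun_mul (hf.differentiableAt two_ne_zero) (hg.differentiableAt two_ne_zero)]
  ring

end SecondDerivative

theorem deriv_deriv_sqrt_comp {f : ℝ → ℝ} {x : ℝ} (hf : ContDiffAt ℝ 2 f x) (hx : 0 < f x) :
    deriv (deriv fun y => √(f y)) x =
      (2 * f x * deriv (deriv f) x - deriv f x ^ 2) / (4 * √(f x) ^ 3) := by
  have hderiv : deriv (fun y => √(f y)) =ᶠ[𝓝 x] fun y => deriv f y / (2 * √(f y)) := by
    filter_upwards [hf.eventually_differentiableAt one_le_two,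
      hf.continuousAt.eventually (lt_mem_nhds hx)] with y hfy hy using deriv_sqrt hfy hy.ne'
  have hsqrt : HasDerivAt (fun y => √(f y)) (deriv f x / (2 * √(f x))) x :=
    (hf.differentiableAt two_ne_zero).hasDerivAt.sqrt hx.ne'
  have hs : 0 < √(f x) := Real.sqrt_pos.2 hx
  rw [hderiv.deriv_eq, ((hf.differentiableAt_deriv le_rfl).hasDerivAt.fun_div
    (hsqrt.const_mul (2 : ℝ)) (by positivity)).deriv]
  field_simp
  rw [Real.sq_sqrt hx.le]
  ring

theorem bohl_diagonal_equation_general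
    (V u₁ u₂ : ℝ → ℝ) (a b : ℝ)
    (h1 : ContDiffOn ℝ 2 u₁ (Set.Ioo a b))
    (h2 : ContDiffOn ℝ 2 u₂ (Set.Ioo a b))
    (hode1 : ∀ x ∈ Set.Ioo a b, deriv (deriv u₁) x = V x * u₁ x)
    (hode2 : ∀ x ∈ Set.Ioo a b, deriv (deriv u₂) x = V x * u₂ x)
    (hW : ∀ x ∈ Set.Ioo a b, u₁ x * deriv u₂ x - u₂ x * deriv u₁ x = 1)
    (hpos : ∀ x ∈ Set.Ioo a b, 0 < u₁ x * u₂ x)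
    (Z : ℝ → ℝ) (hZ : ∀ x, Z x = Real.sqrt (u₁ x * u₂ x)) :
    ∀ x ∈ Set.Ioo a b,
      -(deriv (deriv Z) x) + V x * Z x - 1 / (4 * (Z x) ^ 3) = 0 := by
  intro x hx
  have hu₁ : ContDiffAt ℝ 2 u₁ x := h1.contDiffAt (isOpen_Ioo.mem_nhds hx)
  have hu₂ : ContDiffAt ℝ 2 u₂ x := h2.contDiffAt (isOpen_Ioo.mem_nhds hx)
  have hinvariant := two_mul_deriv_deriv_mul_sub_sq hu₁ hu₂ (hode1 x hx) (hode2 x hx)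
  rw [hW x hx, one_pow] at hinvariant
  have hZ₂ : Z x ^ 2 = u₁ x * u₂ x := by rw [hZ]; exact Real.sq_sqrt (hpos x hx).le
  have hZ₀ : Z x ≠ 0 := by rw [hZ]; exact (Real.sqrt_pos.2 (hpos x hx)).ne'
  have hZ'' : deriv (deriv Z) x = (4 * V x * (u₁ x * u₂ x) ^ 2 - 1) / (4 * Z x ^ 3) := by
    rw [funext hZ, deriv_deriv_sqrt_comp (hu₁.mul hu₂) (hpos x hx), hinvariant]
  rw [hZ'', ← hZ₂]
  field_simp
  ring

theorem bohl_diagonal_equation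
    (V u₁ u₂ : ℝ → ℝ) (a b : ℝ)
    (hV : ContinuousOn V (Set.Ioo a b))
    (h1 : ContDiffOn ℝ 2 u₁ (Set.Ioo a b))
    (h2 : ContDiffOn ℝ 2 u₂ (Set.Ioo a b))
    (hode1 : ∀ x ∈ Set.Ioo a b, deriv (deriv u₁) x = V x * u₁ x)
    (hode2 : ∀ x ∈ Set.Ioo a b, deriv (deriv u₂) x = V x * u₂ x)
    (hW : ∀ x ∈ Set.Ioo a b, u₁ x * deriv u₂ x - u₂ x * deriv u₁ x = 1)
    (hpos : ∀ x ∈ Set.Ioo a b, 0 < u₁ x * u₂ x)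
    (Z : ℝ → ℝ) (hZ : ∀ x, Z x = Real.sqrt (u₁ x * u₂ x)) :
    ∀ x ∈ Set.Ioo a b,
      -(deriv (deriv Z) x) + V x * Z x - 1 / (4 * (Z x) ^ 3) = 0 :=
  bohl_diagonal_equation_general V u₁ u₂ a b h1 h2 hode1 hode2 hW hpos Z hZ
end

section
/- If Z is a nonvanishing, positive, twice continuously differentiable solution of -Z'' + V(x)Z - 1/(4Z³) = 0 on (a,b), then for any fixed c ∈ (a,b), the functions φ^±(x) := Z(x)·exp(± ∫_c^x 1/(2Z(t)²) dt) are two linearly independent solutions of -u'' + V(x)u = 0 on (a,b). -/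
/-!
Writing `W(x) = ∫_c^x dt / (2 Z(t)²)`, so that `W' = 1 / (2 Z²)`, the function
`φ = Z e^{sW}` satisfies `φ' = (Z' + s / (2Z)) e^{sW}`, and the cross terms cancel in
`φ'' = (Z'' + s² / (4 Z³)) e^{sW}`. For `s = ±1` the Ermakov–Pinney equation turns this into
`φ'' = V Z e^{sW} = V φ`. Both solutions equal `Z(c)` at `c`, while their derivatives there
differ by `1 / Z(c) ≠ 0`, so no nontrivial combination of them vanishes near `c`.
-/

open Set

noncomputable section

def bohlPhase (Z : ℝ → ℝ) (c x : ℝ) : ℝ := ∫ t in c..x, 1 / (2 * Z t ^ 2)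

def bohlSolution (Z : ℝ → ℝ) (c s x : ℝ) : ℝ := Z x * Real.exp (s * bohlPhase Z c x)

end

lemma ContinuousOn.hasDerivAt_integral_of_ordConnected {f : ℝ → ℝ} {U : Set ℝ} {c x : ℝ}
    (hf : ContinuousOn f U) (hU : IsOpen U) (hUc : U.OrdConnected) (hc : c ∈ U) (hx : x ∈ U) :
    HasDerivAt (fun y => ∫ t in c..y, f t) (f x) x :=
  intervalIntegral.integral_hasDerivAt_right
    ((hf.mono (hUc.uIcc_subset hc hx)).intervalIntegrable)
    (hf.stronglyMeasurableAtFilter hU x hx) (hf.continuousAt (hU.mem_nhds hx))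

lemma ContDiffOn.hasDerivAt_deriv_of_two {f : ℝ → ℝ} {U : Set ℝ} {x : ℝ}
    (hf : ContDiffOn ℝ 2 f U) (hU : IsOpen U) (hx : x ∈ U) :
    HasDerivAt (deriv f) (deriv (deriv f) x) x :=
  (((hf.deriv_of_isOpen hU (m := 1) (by norm_num)).differentiableOn one_ne_zero).differentiableAt
    (hU.mem_nhds hx)).hasDerivAt

section Bohl

variable {Z : ℝ → ℝ} {U : Set ℝ} {c s x : ℝ}

lemma hasDerivAt_bohlPhase (hU : IsOpen U) (hUc : U.OrdConnected) (hZ : ContinuousOn Z U)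
    (hZ0 : ∀ y ∈ U, Z y ≠ 0) (hc : c ∈ U) (hx : x ∈ U) :
    HasDerivAt (bohlPhase Z c) (1 / (2 * Z x ^ 2)) x := by
  have hf : ContinuousOn (fun t => 1 / (2 * Z t ^ 2)) U :=
    continuousOn_const.div (continuousOn_const.mul (hZ.pow 2))
      fun y hy => mul_ne_zero two_ne_zero (pow_ne_zero 2 (hZ0 y hy))
  exact hf.hasDerivAt_integral_of_ordConnected hU hUc hc hx

lemma hasDerivAt_bohlSolution {z' : ℝ} (hZ : HasDerivAt Z z' x)
    (hW : HasDerivAt (bohlPhase Z c) (1 / (2 * Z x ^ 2)) x) (hZx : Z x ≠ 0) :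
    HasDerivAt (bohlSolution Z c s) ((z' + s / (2 * Z x)) * Real.exp (s * bohlPhase Z c x)) x := by
  refine (hZ.mul (hW.const_mul s).exp).congr_deriv ?_
  field_simp

lemma bohlPhase_self : bohlPhase Z c c = 0 :=
  intervalIntegral.integral_same

lemma bohlSolution_self : bohlSolution Z c s c = Z c := by
  simp [bohlSolution, bohlPhase_self]

lemma hasDerivAt_bohlSolution_of_contDiffOn (hU : IsOpen U) (hUc : U.OrdConnected)
    (hZ : ContDiffOn ℝ 2 Z U) (hZ0 : ∀ y ∈ U, Z y ≠ 0) (hc : c ∈ U) (hx : x ∈ U) :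
    HasDerivAt (bohlSolution Z c s)
      ((deriv Z x + s / (2 * Z x)) * Real.exp (s * bohlPhase Z c x)) x :=
  hasDerivAt_bohlSolution
    ((hZ.differentiableOn two_ne_zero).differentiableAt (hU.mem_nhds hx)).hasDerivAt
    (hasDerivAt_bohlPhase hU hUc hZ.continuousOn hZ0 hc hx) (hZ0 x hx)

lemma deriv_deriv_bohlSolution (hU : IsOpen U) (hUc : U.OrdConnected)
    (hZ : ContDiffOn ℝ 2 Z U) (hZ0 : ∀ y ∈ U, Z y ≠ 0) (hc : c ∈ U) (hx : x ∈ U) :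
    deriv (deriv (bohlSolution Z c s)) x =
      (deriv (deriv Z) x + s ^ 2 / (4 * Z x ^ 3)) * Real.exp (s * bohlPhase Z c x) := by
  have hφ' : deriv (bohlSolution Z c s) =ᶠ[nhds x]
      fun y => (deriv Z y + s / (2 * Z y)) * Real.exp (s * bohlPhase Z c y) := by
    filter_upwards [hU.mem_nhds hx] with y hy
    exact (hasDerivAt_bohlSolution_of_contDiffOn hU hUc hZ hZ0 hc hy).deriv
  have hZx := hZ0 x hx
  have hZ' := ((hZ.differentiableOn two_ne_zero).differentiableAt (hU.mem_nhds hx)).hasDerivAt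
  have hW := (hasDerivAt_bohlPhase hU hUc hZ.continuousOn hZ0 hc hx).const_mul s
  have hφ'' : HasDerivAt (fun y => (deriv Z y + s / (2 * Z y)) * Real.exp (s * bohlPhase Z c y))
      _ x := ((hZ.hasDerivAt_deriv_of_two hU hx).add
    ((hasDerivAt_const x s).div (hZ'.const_mul 2) (mul_ne_zero two_ne_zero hZx))).mul hW.exp
  rw [hφ'.deriv_eq, hφ''.deriv, Pi.add_apply, Pi.div_apply]
  field_simp
  ring

lemma bohlSolution_ode {V : ℝ → ℝ} (hU : IsOpen U) (hUc : U.OrdConnected)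
    (hZ : ContDiffOn ℝ 2 Z U) (hZ0 : ∀ y ∈ U, Z y ≠ 0) (hc : c ∈ U)
    (hZode : ∀ y ∈ U, -(deriv (deriv Z) y) + V y * Z y - 1 / (4 * Z y ^ 3) = 0)
    (hs : s ^ 2 = 1) (hx : x ∈ U) :
    -(deriv (deriv (bohlSolution Z c s)) x) + V x * bohlSolution Z c s x = 0 := by
  have hZ'' : deriv (deriv Z) x = V x * Z x - 1 / (4 * Z x ^ 3) := by linarith [hZode x hx]
  rw [deriv_deriv_bohlSolution hU hUc hZ hZ0 hc hx, bohlSolution, hs, hZ'']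
  ring

lemma bohlSolution_linearIndependent {α β : ℝ} (hU : IsOpen U) (hUc : U.OrdConnected)
    (hZ : ContDiffOn ℝ 2 Z U) (hZ0 : ∀ y ∈ U, Z y ≠ 0) (hc : c ∈ U)
    (h : ∀ x ∈ U, α * bohlSolution Z c 1 x + β * bohlSolution Z c (-1) x = 0) :
    α = 0 ∧ β = 0 := by
  have hZc := hZ0 c hc
  have hvalue : (α + β) * Z c = 0 := by
    simpa only [bohlSolution_self, add_mul] using h c hc
  have hderiv := ((hasDerivAt_bohlSolution_of_contDiffOn (s := 1) hU hUc hZ hZ0 hc hc).const_mul α).add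
    ((hasDerivAt_bohlSolution_of_contDiffOn (s := -1) hU hUc hZ hZ0 hc hc).const_mul β)
  have hzero : (fun x => α * bohlSolution Z c 1 x + β * bohlSolution Z c (-1) x)
      =ᶠ[nhds c] fun _ => 0 := Filter.eventually_of_mem (hU.mem_nhds hc) h
  have hslope := hderiv.deriv.symm.trans (hzero.deriv_eq.trans (deriv_const c 0))
  simp only [bohlPhase_self, mul_zero, Real.exp_zero, mul_one] at hslope
  have hsum : α + β = 0 := (mul_eq_zero.mp hvalue).resolve_right hZc
  -- With `α + β = 0`, the slope at `c` reduces to `(α - β) / (2 Z c)`.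
  have hdiff : α - β = 0 := by
    field_simp at hslope
    linear_combination hslope - 2 * Z c * deriv Z c * hsum
  constructor <;> linarith

end Bohl

theorem bohl_solutions_independent_general
    (V Z : ℝ → ℝ) (a b c : ℝ) (hc : c ∈ Set.Ioo a b)
    (hZpos : ∀ x ∈ Set.Ioo a b, 0 < Z x)
    (hZC2 : ContDiffOn ℝ 2 Z (Set.Ioo a b))
    (hZode : ∀ x ∈ Set.Ioo a b,
      -(deriv (deriv Z) x) + V x * Z x - 1 / (4 * (Z x) ^ 3) = 0)
    (φp φm : ℝ → ℝ)
    (hφp : ∀ x, φp x = Z x * Real.exp (∫ t in c..x, 1 / (2 * (Z t) ^ 2)))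
    (hφm : ∀ x, φm x = Z x * Real.exp (-∫ t in c..x, 1 / (2 * (Z t) ^ 2))) :
    (∀ x ∈ Set.Ioo a b, -(deriv (deriv φp) x) + V x * φp x = 0) ∧
    (∀ x ∈ Set.Ioo a b, -(deriv (deriv φm) x) + V x * φm x = 0) ∧
    (∀ α β : ℝ, (∀ x ∈ Set.Ioo a b, α * φp x + β * φm x = 0) → α = 0 ∧ β = 0) := by
  have hp : φp = bohlSolution Z c 1 := by
    funext x; simp [hφp, bohlSolution, bohlPhase]
  have hm : φm = bohlSolution Z c (-1) := by
    funext x; simp [hφm, bohlSolution, bohlPhase]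
  have hZ0 : ∀ x ∈ Ioo a b, Z x ≠ 0 := fun x hx => (hZpos x hx).ne'
  subst hp hm
  exact ⟨fun x => bohlSolution_ode isOpen_Ioo ordConnected_Ioo hZC2 hZ0 hc hZode (by norm_num),
    fun x => bohlSolution_ode isOpen_Ioo ordConnected_Ioo hZC2 hZ0 hc hZode (by norm_num),
    fun α β => bohlSolution_linearIndependent isOpen_Ioo ordConnected_Ioo hZC2 hZ0 hc⟩

theorem bohl_solutions_independent
    (V Z : ℝ → ℝ) (a b c : ℝ) (hc : c ∈ Set.Ioo a b)
    (hV : ContinuousOn V (Set.Ioo a b))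
    (hZpos : ∀ x ∈ Set.Ioo a b, 0 < Z x)
    (hZC2 : ContDiffOn ℝ 2 Z (Set.Ioo a b))
    (hZode : ∀ x ∈ Set.Ioo a b,
      -(deriv (deriv Z) x) + V x * Z x - 1 / (4 * (Z x) ^ 3) = 0)
    (φp φm : ℝ → ℝ)
    (hφp : ∀ x, φp x = Z x * Real.exp (∫ t in c..x, 1 / (2 * (Z t) ^ 2)))
    (hφm : ∀ x, φm x = Z x * Real.exp (-∫ t in c..x, 1 / (2 * (Z t) ^ 2))) :
    (∀ x ∈ Set.Ioo a b, -(deriv (deriv φp) x) + V x * φp x = 0) ∧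
    (∀ x ∈ Set.Ioo a b, -(deriv (deriv φm) x) + V x * φm x = 0) ∧
    (∀ α β : ℝ, (∀ x ∈ Set.Ioo a b, α * φp x + β * φm x = 0) → α = 0 ∧ β = 0) :=
  bohl_solutions_independent_general V Z a b c hc hZpos hZC2 hZode φp φm hφp hφm
end

section
/- Let Z be a nonvanishing C² function on (a,b) satisfying -Z'' + VZ - 1/(4Z³) = 0, and define the first-order operators 𝒟^±[Z] := d/dx - Z'/Z ∓ 1/(2Z²). Then for every C² function f, (𝒟^±[Z] - 2 d/dx)(𝒟^±[Z] f) = -f'' + V f. -/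
/-!
Write `𝒟^±[Z] = d/dx - w` with `w = Z'/Z ± 1/(2Z²)`. For any first-order operator of this form,
`(𝒟 - 2 d/dx)(𝒟 f) = -(𝒟 f)' - w 𝒟 f = -f'' + (w' + w²) f`, and since `(±1)² = 1` the equation
for `Z` is exactly the Riccati equation `w' + w² = Z''/Z + 1/(4Z⁴) = V`.
-/

noncomputable section

def derivSubMul (w f : ℝ → ℝ) : ℝ → ℝ := fun y ↦ deriv f y - w y * f y

theorem derivSubMul_apply (w f : ℝ → ℝ) (y : ℝ) :
    derivSubMul w f y = deriv f y - w y * f y := rfl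

theorem derivSubMul_derivSubMul_sub_two_deriv {w f : ℝ → ℝ} {x : ℝ}
    (hw : DifferentiableAt ℝ w x) (hf : DifferentiableAt ℝ f x)
    (hf' : DifferentiableAt ℝ (deriv f) x) :
    derivSubMul w (derivSubMul w f) x - 2 * deriv (derivSubMul w f) x
      = -deriv (deriv f) x + (deriv w x + w x ^ 2) * f x := by
  have hderiv : deriv (derivSubMul w f) x
      = deriv (deriv f) x - (deriv w x * f x + w x * deriv f x) :=
    (hf'.hasDerivAt.sub (hw.hasDerivAt.mul hf.hasDerivAt)).deriv
  rw [derivSubMul_apply, derivSubMul_apply, hderiv]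
  ring

def darbouxPotential (Z : ℝ → ℝ) (ε : ℝ) : ℝ → ℝ := fun y ↦ deriv Z y / Z y + ε / (2 * Z y ^ 2)

theorem hasDerivAt_darbouxPotential {Z : ℝ → ℝ} {x : ℝ} (ε : ℝ) (hZx : Z x ≠ 0)
    (hZ : DifferentiableAt ℝ Z x) (hZ' : DifferentiableAt ℝ (deriv Z) x) :
    HasDerivAt (darbouxPotential Z ε)
      (deriv (deriv Z) x / Z x - (deriv Z x / Z x) ^ 2 - ε * deriv Z x / Z x ^ 3) x := by
  have hsq : HasDerivAt (fun y ↦ 2 * Z y ^ 2) (2 * (2 * Z x * deriv Z x)) x := by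
    simpa [mul_comm, mul_assoc, mul_left_comm] using (hZ.hasDerivAt.pow 2).const_mul 2
  refine ((hZ'.hasDerivAt.div hZ.hasDerivAt hZx).add
    ((hasDerivAt_const x ε).div hsq (by positivity))).congr_deriv ?_
  field_simp
  ring

theorem deriv_darbouxPotential_add_sq {Z : ℝ → ℝ} {x ε : ℝ} (hε : ε ^ 2 = 1) (hZx : Z x ≠ 0)
    (hZ : DifferentiableAt ℝ Z x) (hZ' : DifferentiableAt ℝ (deriv Z) x) :
    deriv (darbouxPotential Z ε) x + darbouxPotential Z ε x ^ 2
      = deriv (deriv Z) x / Z x + 1 / (4 * Z x ^ 4) := by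
  rw [(hasDerivAt_darbouxPotential ε hZx hZ hZ').deriv, darbouxPotential]
  field_simp
  linear_combination 4 * hε

theorem ContDiffOn.differentiableAt_deriv_of_isOpen {g : ℝ → ℝ} {s : Set ℝ} {x : ℝ}
    (hg : ContDiffOn ℝ 2 g s) (hs : IsOpen s) (hx : x ∈ s) :
    DifferentiableAt ℝ g x ∧ DifferentiableAt ℝ (deriv g) x :=
  ⟨(hg.differentiableOn (by norm_num)).differentiableAt (hs.mem_nhds hx),
    ((hg.deriv_of_isOpen hs (by norm_num : (1 : WithTop ℕ∞) + 1 ≤ 2)).differentiableOn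
      one_ne_zero).differentiableAt (hs.mem_nhds hx)⟩

end

theorem darboux_factorization_general
    (V Z : ℝ → ℝ) (a b : ℝ)
    (hZ0 : ∀ x ∈ Set.Ioo a b, Z x ≠ 0)
    (hZC2 : ContDiffOn ℝ 2 Z (Set.Ioo a b))
    (hZode : ∀ x ∈ Set.Ioo a b,
      -(deriv (deriv Z) x) + V x * Z x - 1 / (4 * (Z x) ^ 3) = 0)
    (ε : ℝ) (hε : ε = 1 ∨ ε = -1)
    (D : (ℝ → ℝ) → (ℝ → ℝ))
    (hD : ∀ f x, D f x = deriv f x - (deriv Z x / Z x) * f x - ε * f x / (2 * (Z x) ^ 2))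
    (f : ℝ → ℝ) (hf : ContDiffOn ℝ 2 f (Set.Ioo a b)) :
    ∀ x ∈ Set.Ioo a b,
      D (D f) x - 2 * deriv (D f) x = -(deriv (deriv f) x) + V x * f x := by
  intro x hx
  have hD_eq : ∀ g, D g = derivSubMul (darbouxPotential Z ε) g := fun g ↦ funext fun y ↦ by
    rw [hD, derivSubMul, darbouxPotential]; ring
  have hε_sq : ε ^ 2 = 1 := by rcases hε with rfl | rfl <;> norm_num
  obtain ⟨hZ, hZ'⟩ := hZC2.differentiableAt_deriv_of_isOpen isOpen_Ioo hx
  obtain ⟨hf, hf'⟩ := hf.differentiableAt_deriv_of_isOpen isOpen_Ioo hx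
  have hZx := hZ0 x hx
  have hriccati : deriv (darbouxPotential Z ε) x + darbouxPotential Z ε x ^ 2 = V x := by
    have hZ'' : deriv (deriv Z) x = V x * Z x - 1 / (4 * Z x ^ 3) := by linarith [hZode x hx]
    rw [deriv_darbouxPotential_add_sq hε_sq hZx hZ hZ', hZ'']
    field_simp
    ring
  rw [hD_eq, hD_eq, derivSubMul_derivSubMul_sub_two_deriv
    (hasDerivAt_darbouxPotential ε hZx hZ hZ').differentiableAt hf hf', hriccati]

theorem darboux_factorization
    (V Z : ℝ → ℝ) (a b : ℝ)
    (hV : ContinuousOn V (Set.Ioo a b))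
    (hZ0 : ∀ x ∈ Set.Ioo a b, Z x ≠ 0)
    (hZC2 : ContDiffOn ℝ 2 Z (Set.Ioo a b))
    (hZode : ∀ x ∈ Set.Ioo a b,
      -(deriv (deriv Z) x) + V x * Z x - 1 / (4 * (Z x) ^ 3) = 0)
    (ε : ℝ) (hε : ε = 1 ∨ ε = -1)
    (D : (ℝ → ℝ) → (ℝ → ℝ))
    (hD : ∀ f x, D f x = deriv f x - (deriv Z x / Z x) * f x - ε * f x / (2 * (Z x) ^ 2))
    (f : ℝ → ℝ) (hf : ContDiffOn ℝ 2 f (Set.Ioo a b)) :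
    ∀ x ∈ Set.Ioo a b,
      D (D f) x - 2 * deriv (D f) x = -(deriv (deriv f) x) + V x * f x :=
  darboux_factorization_general V Z a b hZ0 hZC2 hZode ε hε D hD f hf
end

section
/- Let z : ℤ → ℝ be positive, S_n = (1+√(1+4z_n²z_{n-1}²))/(2z_n z_{n-1}), and φ^±_n the product-ansatz sequences φ⁺_n = z_n ∏_{ℓ≤n} S_ℓ, φ⁻_n = z_n / ∏_{ℓ≤n} S_ℓ. Then (Δφ⁺)_n/φ⁺_n = (Δφ⁻)_n/φ⁻_n for all n; i.e., both φ⁺ and φ⁻ solve the same discrete Schrödinger equation -Δφ + V^{[z]}φ = 0 with V^{[z]}_n := (z_{n+1}/z_n)S_{n+1} + z_{n-1}/(z_n S_n) - 2. -/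
/-!
Both sequences have the form `φ n = z n * Q n` with `Q n = Q (n - 1) * r n`, where `r = S` for
`φ⁺` and `r = S⁻¹` for `φ⁻`. For such a sequence `(φ (n + 1) + φ (n - 1)) / φ n` equals
`z (n + 1) / z n * r (n + 1) + z (n - 1) / (z n * r n)`. The two potentials obtained from
`r = S` and `r = S⁻¹` coincide because `S n - (S n)⁻¹ = (z n * z (n - 1))⁻¹`, so that
`z (n + 1) * (S (n + 1) - S (n + 1)⁻¹) = (z n)⁻¹ = z (n - 1) * (S n - (S n)⁻¹)`.
-/

open Finset

lemma Finset.prod_Icc_int_add_one_right {M : Type*} [CommMonoid M] {a b : ℤ} (h : a ≤ b + 1)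
    (f : ℤ → M) : ∏ x ∈ Icc a (b + 1), f x = (∏ x ∈ Icc a b, f x) * f (b + 1) := by
  rw [← insert_Icc_right_eq_Icc_add_one h, prod_insert (by simp), mul_comm]

lemma larger_root_pos {a : ℝ} (ha : 0 < a) : 0 < (1 + √(1 + 4 * a ^ 2)) / (2 * a) := by
  positivity

lemma larger_root_sub_inv {a : ℝ} (ha : a ≠ 0) :
    (1 + √(1 + 4 * a ^ 2)) / (2 * a) - ((1 + √(1 + 4 * a ^ 2)) / (2 * a))⁻¹ = a⁻¹ := by
  have hsq : √(1 + 4 * a ^ 2) ^ 2 = 1 + 4 * a ^ 2 := Real.sq_sqrt (by positivity)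
  field_simp
  linear_combination hsq

lemma shift_add_shift_eq_ratio_potential_mul {z Q r : ℤ → ℝ} {n : ℤ} (hz : z n ≠ 0)
    (hr : r n ≠ 0) (hsucc : Q (n + 1) = Q n * r (n + 1)) (hself : Q n = Q (n - 1) * r n) :
    z (n + 1) * Q (n + 1) + z (n - 1) * Q (n - 1)
      = (z (n + 1) / z n * r (n + 1) + z (n - 1) / (z n * r n)) * (z n * Q n) := by
  rw [hsucc, hself]
  field_simp

lemma ratio_potential_inv_eq {z S : ℤ → ℝ} {n : ℤ} (hz : ∀ k, z k ≠ 0)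
    (hS : ∀ k, S k ≠ 0) (hsub : ∀ k, S k - (S k)⁻¹ = (z k * z (k - 1))⁻¹) :
    z (n + 1) / z n * (S (n + 1))⁻¹ + z (n - 1) / (z n * (S n)⁻¹)
      = z (n + 1) / z n * S (n + 1) + z (n - 1) / (z n * S n) := by
  have key : z (n + 1) * (S (n + 1) - (S (n + 1))⁻¹) = z (n - 1) * (S n - (S n)⁻¹) := by
    have := hz (n - 1); have := hz (n + 1)
    rw [hsub, hsub, add_sub_cancel_right]
    field_simp
  rw [← sub_eq_zero]
  have := hz n; have := hS n; have := hS (n + 1)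
  calc _ = (z (n - 1) * (S n - (S n)⁻¹) - z (n + 1) * (S (n + 1) - (S (n + 1))⁻¹)) / z n := by
        field_simp; ring
    _ = 0 := by rw [key, sub_self, zero_div]

lemma second_difference_div_eq {φ : ℤ → ℝ} {n : ℤ} {V : ℝ} (hφ : φ n ≠ 0)
    (h : φ (n + 1) + φ (n - 1) = (V + 2) * φ n) :
    (φ (n + 1) + φ (n - 1) - 2 * φ n) / φ n = V := by
  rw [h]
  field_simp
  ring

theorem discrete_bohl_same_equation
    (z : ℤ → ℝ) (hz : ∀ n, 0 < z n)
    (S : ℤ → ℝ)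
    (hS : ∀ n, S n = (1 + Real.sqrt (1 + 4 * (z n) ^ 2 * (z (n - 1)) ^ 2))
      / (2 * z n * z (n - 1)))
    (m : ℤ) (φp φm : ℤ → ℝ)
    (hφp : ∀ n, φp n = z n * ∏ ℓ ∈ Finset.Icc (m + 1) n, S ℓ)
    (hφm : ∀ n, φm n = z n * (∏ ℓ ∈ Finset.Icc (m + 1) n, S ℓ)⁻¹)
    (Vz : ℤ → ℝ)
    (hVz : ∀ n, Vz n = (z (n + 1) / z n) * S (n + 1) + z (n - 1) / (z n * S n) - 2) :
    ∀ n ≥ m + 1,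
      ((φp (n + 1) + φp (n - 1) - 2 * φp n) / φp n
        = (φm (n + 1) + φm (n - 1) - 2 * φm n) / φm n) ∧
      (-(φp (n + 1) + φp (n - 1) - 2 * φp n) + Vz n * φp n = 0) ∧
      (-(φm (n + 1) + φm (n - 1) - 2 * φm n) + Vz n * φm n = 0) := by
  have hS' (k : ℤ) :
      S k = (1 + √(1 + 4 * (z k * z (k - 1)) ^ 2)) / (2 * (z k * z (k - 1))) := by
    rw [hS k]; ring_nf
  have hSpos (k : ℤ) : 0 < S k := hS' k ▸ larger_root_pos (mul_pos (hz k) (hz (k - 1)))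
  have hSsub (k : ℤ) : S k - (S k)⁻¹ = (z k * z (k - 1))⁻¹ :=
    hS' k ▸ larger_root_sub_inv (mul_pos (hz k) (hz (k - 1))).ne'
  set P : ℤ → ℝ := fun k ↦ ∏ ℓ ∈ Icc (m + 1) k, S ℓ
  have hP (k : ℤ) (hk : m ≤ k) : P (k + 1) = P k * S (k + 1) :=
    prod_Icc_int_add_one_right (by omega) S
  have hPpos (k : ℤ) : 0 < P k := prod_pos fun ℓ _ ↦ hSpos ℓ
  intro n hn
  have hPsucc := hP n (by omega)
  have hPself : P n = P (n - 1) * S n := by simpa using hP (n - 1) (by omega)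
  have hzn := (hz n).ne'
  have hplus : φp (n + 1) + φp (n - 1) = (Vz n + 2) * φp n := by
    simp only [hφp, hVz, sub_add_cancel]
    exact shift_add_shift_eq_ratio_potential_mul hzn (hSpos n).ne' hPsucc hPself
  have hminus : φm (n + 1) + φm (n - 1) = (Vz n + 2) * φm n := by
    simp only [hφm, hVz, sub_add_cancel,
      ← ratio_potential_inv_eq (fun k ↦ (hz k).ne') (fun k ↦ (hSpos k).ne') hSsub]
    exact shift_add_shift_eq_ratio_potential_mul
      (Q := fun k ↦ (P k)⁻¹) (r := fun k ↦ (S k)⁻¹) hzn (inv_ne_zero (hSpos n).ne')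
      (by rw [hPsucc, mul_inv]) (by rw [hPself, mul_inv])
  have hφpn : φp n ≠ 0 := by rw [hφp]; exact mul_ne_zero hzn (hPpos n).ne'
  have hφmn : φm n ≠ 0 := by rw [hφm]; exact mul_ne_zero hzn (inv_ne_zero (hPpos n).ne')
  exact ⟨(second_difference_div_eq hφpn hplus).trans
    (second_difference_div_eq hφmn hminus).symm, by linarith, by linarith⟩
end

section
/- Let ψ⁺, ψ⁻ be positive solutions of -Δψ + Vψ = 0 on ℤ with Wronskian 1, z_n = √(ψ⁺_n ψ⁻_n). Then (1/(2z_n²))(√(1+4z_n²z_{n+1}²) + √(1+4z_n²z_{n-1}²)) = V_n + 2 for all n. In particular the diagonal G_{nn} := ψ⁺_n ψ⁻_n of the Green matrix determines V via √(1+4G_{nn}G_{n+1,n+1}) + √(1+4G_{nn}G_{n-1,n-1}) = 2(V_n+2)G_{nn}. -/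
/-!
Writing `a = ψ⁺ₙψ⁻ₙ₊₁` and `b = ψ⁺ₙ₊₁ψ⁻ₙ`, the Wronskian gives `a - b = 1`, hence
`1 + 4 Gₙ Gₙ₊₁ = (a - b)² + 4ab = (a + b)²`, so the square roots are the symmetrised products
`ψ⁺ₙψ⁻ₙ₊₁ + ψ⁺ₙ₊₁ψ⁻ₙ` (and the same with `n - 1`). Their sum is
`ψ⁺ₙ(ψ⁻ₙ₊₁ + ψ⁻ₙ₋₁) + ψ⁻ₙ(ψ⁺ₙ₊₁ + ψ⁺ₙ₋₁)`, which the equation `ψₙ₊₁ + ψₙ₋₁ = (Vₙ + 2)ψₙ`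
turns into `2(Vₙ + 2)Gₙ`.
-/

theorem Real.sqrt_one_add_four_mul_of_sub_eq_one {x y : ℝ} (h : x - y = 1) (hxy : 0 ≤ x + y) :
    √(1 + 4 * (x * y)) = x + y := by
  rw [show 1 + 4 * (x * y) = (x + y) ^ 2 by linear_combination (-(x - y + 1)) * h,
    Real.sqrt_sq hxy]

section DiscreteSchrodinger

variable {V ψp ψm G : ℤ → ℝ}

theorem sqrt_one_add_four_mul_green_succ (hp : ∀ n, 0 < ψp n) (hm : ∀ n, 0 < ψm n)
    (hW : ∀ n, ψp n * ψm (n + 1) - ψp (n + 1) * ψm n = 1)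
    (hG : ∀ n, G n = ψp n * ψm n) (n : ℤ) :
    √(1 + 4 * G n * G (n + 1)) = ψp n * ψm (n + 1) + ψp (n + 1) * ψm n := by
  have hpos : 0 ≤ ψp n * ψm (n + 1) + ψp (n + 1) * ψm n := by
    have := hp n; have := hm n; have := hp (n + 1); have := hm (n + 1)
    positivity
  rw [← Real.sqrt_one_add_four_mul_of_sub_eq_one (hW n) hpos, hG, hG]
  ring_nf

theorem sqrt_add_sqrt_green_eq (hp : ∀ n, 0 < ψp n) (hm : ∀ n, 0 < ψm n)
    (hodep : ∀ n, ψp (n + 1) + ψp (n - 1) - 2 * ψp n = V n * ψp n)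
    (hodem : ∀ n, ψm (n + 1) + ψm (n - 1) - 2 * ψm n = V n * ψm n)
    (hW : ∀ n, ψp n * ψm (n + 1) - ψp (n + 1) * ψm n = 1)
    (hG : ∀ n, G n = ψp n * ψm n) (n : ℤ) :
    √(1 + 4 * G n * G (n + 1)) + √(1 + 4 * G n * G (n - 1)) = 2 * (V n + 2) * G n := by
  have hsucc := sqrt_one_add_four_mul_green_succ hp hm hW hG n
  have hpred := sqrt_one_add_four_mul_green_succ hp hm hW hG (n - 1)
  rw [sub_add_cancel] at hpred
  rw [mul_right_comm 4 (G n) (G (n - 1)), hpred, hsucc, hG]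
  linear_combination ψm n * hodep n + ψp n * hodem n

end DiscreteSchrodinger

theorem diagonal_determines_potential_general
    (V ψp ψm : ℤ → ℝ)
    (hp : ∀ n, 0 < ψp n) (hm : ∀ n, 0 < ψm n)
    (hodep : ∀ n, ψp (n + 1) + ψp (n - 1) - 2 * ψp n = V n * ψp n)
    (hodem : ∀ n, ψm (n + 1) + ψm (n - 1) - 2 * ψm n = V n * ψm n)
    (hW : ∀ n, ψp n * ψm (n + 1) - ψp (n + 1) * ψm n = 1)
    (z G : ℤ → ℝ)
    (hz : ∀ n, z n = Real.sqrt (ψp n * ψm n))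
    (hG : ∀ n, G n = ψp n * ψm n) :
    (∀ n, (1 / (2 * (z n) ^ 2)) *
        (Real.sqrt (1 + 4 * (z n) ^ 2 * (z (n + 1)) ^ 2)
          + Real.sqrt (1 + 4 * (z n) ^ 2 * (z (n - 1)) ^ 2)) = V n + 2) ∧
    (∀ n, Real.sqrt (1 + 4 * G n * G (n + 1))
          + Real.sqrt (1 + 4 * G n * G (n - 1)) = 2 * (V n + 2) * G n) := by
  have hGpos (n : ℤ) : 0 < G n := hG n ▸ mul_pos (hp n) (hm n)
  have hz_sq (n : ℤ) : z n ^ 2 = G n := by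
    rw [hz, hG, Real.sq_sqrt (mul_pos (hp n) (hm n)).le]
  have hsum := sqrt_add_sqrt_green_eq hp hm hodep hodem hW hG
  refine ⟨fun n => ?_, hsum⟩
  rw [hz_sq, hz_sq, hz_sq, hsum n]
  field_simp [(hGpos n).ne']

theorem diagonal_determines_potential
    (V ψp ψm : ℤ → ℝ)
    (hp : ∀ n, 0 < ψp n) (hm : ∀ n, 0 < ψm n)
    (hodep : ∀ n, ψp (n + 1) + ψp (n - 1) - 2 * ψp n = V n * ψp n)
    (hodem : ∀ n, ψm (n + 1) + ψm (n - 1) - 2 * ψm n = V n * ψm n)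
    (hW : ∀ n, ψp n * ψm (n + 1) - ψp (n + 1) * ψm n = 1)
    (hge : ∀ n, 1 ≤ ψp n * ψm (n + 1) + ψm n * ψp (n + 1)
             ∧ 1 ≤ ψp n * ψm (n - 1) + ψm n * ψp (n - 1))
    (z G : ℤ → ℝ)
    (hz : ∀ n, z n = Real.sqrt (ψp n * ψm n))
    (hG : ∀ n, G n = ψp n * ψm n) :
    (∀ n, (1 / (2 * (z n) ^ 2)) *
        (Real.sqrt (1 + 4 * (z n) ^ 2 * (z (n + 1)) ^ 2)
          + Real.sqrt (1 + 4 * (z n) ^ 2 * (z (n - 1)) ^ 2)) = V n + 2) ∧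
    (∀ n, Real.sqrt (1 + 4 * G n * G (n + 1))
          + Real.sqrt (1 + 4 * G n * G (n - 1)) = 2 * (V n + 2) * G n) :=
  diagonal_determines_potential_general V ψp ψm hp hm hodep hodem hW z G hz hG
end

section
/- If positive sequences ψ⁺, ψ⁻ solve -Δψ + Vψ = 0 on ℤ with Wronskian 1 and G_{nn} = ψ⁺_n ψ⁻_n, then (V_n + 2)·G_{nn} ≥ 1 for all n; in particular V_n > -2. -/
theorem diagonal_lower_bound
    (V ψp ψm : ℤ → ℝ)
    (hp : ∀ n, 0 < ψp n) (hm : ∀ n, 0 < ψm n)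
    (hodep : ∀ n, ψp (n + 1) + ψp (n - 1) - 2 * ψp n = V n * ψp n)
    (hodem : ∀ n, ψm (n + 1) + ψm (n - 1) - 2 * ψm n = V n * ψm n)
    (hW : ∀ n, ψp n * ψm (n + 1) - ψp (n + 1) * ψm n = 1)
    (G : ℤ → ℝ) (hG : ∀ n, G n = ψp n * ψm n) :
    ∀ n, 1 ≤ (V n + 2) * G n ∧ -2 < V n := by
  intro n
  have ha := hodep n
  have hb := hW (n - 1)
  have h1 : n - 1 + 1 = n := by ring
  rw [h1] at hb
  have key : 1 ≤ (V n + 2) * G n := by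
    rw [hG]
    nlinarith [hp (n+1), hp (n-1), hp n, hm (n+1), hm (n-1), hm n,
      mul_pos (hp (n+1)) (hm n), mul_pos (hp n) (hm (n-1))]
  refine ⟨key, ?_⟩
  have hGpos : 0 < G n := by rw [hG]; exact mul_pos (hp n) (hm n)
  nlinarith
end

section
/- Let z : ℤ → ℝ be positive, S_k = (1+√(1+4z_k²z_{k-1}²))/(2z_k z_{k-1}), Q_n = 1 - z_{n+1}S_{n+1}/z_n, and V^{[z]}_n = (z_{n+1}/z_n)S_{n+1} + z_{n-1}/(z_n S_n) - 2. Then the telescoping identity Q_{n-1}/(1-Q_{n-1}) - Q_n = V^{[z]}_n holds for all n, giving the Darboux-type factorization of -Δ + V^{[z]} into shifted first-order difference operators. -/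
theorem discrete_darboux_telescoping
    (z : ℤ → ℝ) (hz : ∀ n, 0 < z n)
    (S : ℤ → ℝ)
    (hS : ∀ n, S n = (1 + Real.sqrt (1 + 4 * (z n) ^ 2 * (z (n - 1)) ^ 2))
      / (2 * z n * z (n - 1)))
    (Q : ℤ → ℝ) (hQ : ∀ n, Q n = 1 - z (n + 1) * S (n + 1) / z n)
    (Vz : ℤ → ℝ)
    (hVz : ∀ n, Vz n = (z (n + 1) / z n) * S (n + 1) + z (n - 1) / (z n * S n) - 2) :
    ∀ n, Q (n - 1) / (1 - Q (n - 1)) - Q n = Vz n := by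
  have hSpos : ∀ m, 0 < S m := by
    intro m
    rw [hS]
    have hs := Real.sqrt_nonneg (1 + 4 * (z m) ^ 2 * (z (m - 1)) ^ 2)
    have h2 := hz m
    have h3 := hz (m - 1)
    positivity
  intro n
  have hzn := hz n
  have hzn1 := hz (n - 1)
  have hzp := hz (n + 1)
  have hSn := hSpos n
  have hSn1 := hSpos (n + 1)
  have hidx : (n - 1 : ℤ) + 1 = n := by ring
  rw [hQ, hQ, hVz, hidx]
  have key : (1 : ℝ) - (1 - z n * S n / z (n - 1)) = z n * S n / z (n - 1) := by
    ring
  rw [key]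
  field_simp
  ring
end
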